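/- arXiv:2110.04533 — 3 statements merged into one kernel-verified Lean document; each statement's English description precedes it below -/
import Mathlib

section
/- Let G be a finite directed sinkless graph on n vertices in which every simple cycle has negative weight sum. Then for every infinite path π in G, the partial sums of weights tend to −∞; in particular En⁻(w(π)) = −∞ and En⁺(w(π)) < ∞. -/
open Filter

/-- In a finite sinkless graph where every simple cycle has negative weight sum,
along every infinite path the partial sums tend to `−∞`; in particular `En⁻ = −∞` and
`En⁺ < ∞`. -/
theorem partial_sums_tendsto_bot_of_neg_simple_cycles {V : Type*} [Fintype V]
    (E : V → V → Prop) (w : V → V → ℤ)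
    (hsinkless : ∀ v, ∃ u, E v u)
    (hcyc : ∀ (k : ℕ) (p : ℕ → V), 1 ≤ k → (∀ i < k, E (p i) (p (i + 1))) → p k = p 0 →
      (∀ i < k, ∀ j < k, p i = p j → i = j) →
      ∑ i ∈ Finset.range k, w (p i) (p (i + 1)) < 0) :
    ∀ p : ℕ → V, (∀ i, E (p i) (p (i + 1))) →
      Filter.Tendsto (fun k => ∑ i ∈ Finset.range k, w (p i) (p (i + 1)))
          Filter.atTop Filter.atBot ∧
        (⨅ k, (((∑ i ∈ Finset.range k, w (p i) (p (i + 1)) : ℤ) : ℝ) : EReal)) = ⊥ ∧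
        (⨆ k, (((∑ i ∈ Finset.range k, w (p i) (p (i + 1)) : ℤ) : ℝ) : EReal)) < ⊤ := by
  classical
  intro p hp
  have hVne : Nonempty V := ⟨p 0⟩
  set n := Fintype.card V with hn_def
  have hn : 0 < n := Fintype.card_pos
  -- a uniform upper bound on weights
  obtain ⟨C, hC0, hC⟩ : ∃ C : ℤ, 0 ≤ C ∧ ∀ u v, w u v ≤ C := by
    refine ⟨max 0 ((Finset.univ : Finset (V × V)).sup'
      (Finset.univ_nonempty.mono (by simp) |>.mono le_rfl) (fun uv => w uv.1 uv.2)), le_max_left _ _, ?_⟩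
    intro u v
    exact le_max_of_le_right (Finset.le_sup' (fun uv : V × V => w uv.1 uv.2) (Finset.mem_univ (u, v)))
  -- key uniform bound on partial sums of any infinite path
  have key : ∀ k : ℕ, ∀ q : ℕ → V, (∀ i, E (q i) (q (i + 1))) →
      ∑ i ∈ Finset.range k, w (q i) (q (i + 1)) ≤ n * C - (k / n : ℕ) := by
    intro k
    induction k using Nat.strong_induction_on with
    | _ k IH =>
      intro q hq
      by_cases hkn : k < n
      · have h1 : ∑ i ∈ Finset.range k, w (q i) (q (i + 1)) ≤ (k : ℤ) * C := by
          calc ∑ i ∈ Finset.range k, w (q i) (q (i + 1)) ≤ ∑ _i ∈ Finset.range k, C :=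
              Finset.sum_le_sum fun i _ => hC _ _
          _ = (k : ℤ) * C := by simp [mul_comm]
        have h2 : (k : ℤ) * C ≤ n * C :=
          mul_le_mul_of_nonneg_right (by exact_mod_cast hkn.le) hC0
        have h3 : k / n = 0 := Nat.div_eq_of_lt hkn
        omega
      · push_neg at hkn
        -- find the first repeated vertex; it occurs within the first n+1 vertices
        have hex : ∃ j, ∃ i < j, q i = q j := by
          obtain ⟨a, b, hab, hqeq⟩ := Fintype.exists_ne_map_eq_of_card_lt
            (fun t : Fin (n + 1) => q t) (by simp [hn_def])
          rcases lt_or_gt_of_ne hab with h | h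
          · exact ⟨b, a, by exact_mod_cast h, hqeq⟩
          · exact ⟨a, b, by exact_mod_cast h, hqeq.symm⟩
        set j := Nat.find hex with hj_def
        obtain ⟨i, hij, hqij⟩ := Nat.find_spec hex
        have hjn : j ≤ n := by
          obtain ⟨a, b, hab, hqeq⟩ := Fintype.exists_ne_map_eq_of_card_lt
            (fun t : Fin (n + 1) => q t) (by simp [hn_def])
          rcases lt_or_gt_of_ne hab with h | h
          · exact le_trans (Nat.find_min' hex ⟨a, by exact_mod_cast h, hqeq⟩) (Nat.lt_succ_iff.mp b.2)
          · exact le_trans (Nat.find_min' hex ⟨b, by exact_mod_cast h, hqeq.symm⟩) (Nat.lt_succ_iff.mp a.2)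
        -- vertices q 0, ..., q (j-1) are pairwise distinct
        have hdist : ∀ a < j, ∀ b < j, q a = q b → a = b := by
          intro a ha b hb hab
          by_contra hne
          rcases lt_or_gt_of_ne hne with h | h
          · exact absurd ⟨a, h, hab⟩ (Nat.find_min hex hb)
          · exact absurd ⟨b, h, hab.symm⟩ (Nat.find_min hex ha)
        set c := j - i with hc_def
        have hc1 : 1 ≤ c := by omega
        have hcn : c ≤ n := by omega
        have hic : i + c = j := by omega
        -- the simple cycle q i → ... → q j has weight ≤ -1
        have hcycle : ∑ t ∈ Finset.range c, w (q (i + t)) (q (i + t + 1)) ≤ -1 := by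
          have h0 := hcyc c (fun t => q (i + t)) hc1 (fun t _ => by
              simpa [add_assoc] using hq (i + t))
            (by simp only [hic, add_zero]; exact hqij.symm)
            (by
              intro a ha b hb hab
              have := hdist (i + a) (by omega) (i + b) (by omega) hab
              omega)
          have h2 : ∑ t ∈ Finset.range c, w (q (i + t)) (q (i + t + 1)) < 0 := by
            refine lt_of_eq_of_lt ?_ h0
            exact Finset.sum_congr rfl fun t _ => by rw [add_assoc]
          omega
        -- the path with the cycle removed
        set q' : ℕ → V := fun t => if t < i then q t else q (t + c) with hq'_def
        have hq'path : ∀ t, E (q' t) (q' (t + 1)) := by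
          intro t
          simp only [hq'_def]
          rcases lt_trichotomy (t + 1) i with h | h | h
          · rw [if_pos (by omega), if_pos h]; exact hq t
          · rw [if_pos (by omega), if_neg (by omega)]
            have : q (t + 1 + c) = q (t + 1) := by
              rw [show t + 1 + c = j by omega, ← hqij, show i = t + 1 by omega]
            rw [this]; exact hq t
          · rw [if_neg (by omega), if_neg (by omega)]
            rw [show t + 1 + c = t + c + 1 from by omega]
            exact hq (t + c)
        have hkc : c ≤ k := le_trans hcn hkn
        -- sum identity: S_q(k) = S_{q'}(k - c) + cycle
        have hsum : ∑ t ∈ Finset.range k, w (q t) (q (t + 1)) =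
            ∑ t ∈ Finset.range (k - c), w (q' t) (q' (t + 1)) +
              ∑ t ∈ Finset.range c, w (q (i + t)) (q (i + t + 1)) := by
          have hk_split : k = i + c + (k - j) := by omega
          have hkc_split : k - c = i + (k - j) := by omega
          have L : ∑ t ∈ Finset.range k, w (q t) (q (t + 1)) =
              (∑ t ∈ Finset.range i, w (q t) (q (t + 1))) +
              (∑ t ∈ Finset.range c, w (q (i + t)) (q (i + t + 1))) +
              (∑ t ∈ Finset.range (k - j), w (q (i + c + t)) (q (i + c + t + 1))) := by
            conv_lhs => rw [hk_split]
            rw [Finset.sum_range_add, Finset.sum_range_add]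
          have R : ∑ t ∈ Finset.range (k - c), w (q' t) (q' (t + 1)) =
              (∑ t ∈ Finset.range i, w (q' t) (q' (t + 1))) +
              (∑ t ∈ Finset.range (k - j), w (q' (i + t)) (q' (i + t + 1))) := by
            conv_lhs => rw [hkc_split]
            rw [Finset.sum_range_add]
          have e1 : ∑ t ∈ Finset.range i, w (q t) (q (t + 1)) =
              ∑ t ∈ Finset.range i, w (q' t) (q' (t + 1)) := by
            refine Finset.sum_congr rfl fun t ht => ?_
            rw [Finset.mem_range] at ht
            simp only [hq'_def]
            rcases eq_or_lt_of_le (Nat.succ_le_of_lt ht) with h | h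
            · rw [if_pos ht, if_neg (by omega)]
              rw [show t + 1 + c = j by omega, ← hqij, show i = t + 1 from by omega]
            · rw [if_pos ht, if_pos h]
          have e2 : ∑ t ∈ Finset.range (k - j), w (q (i + c + t)) (q (i + c + t + 1)) =
              ∑ t ∈ Finset.range (k - j), w (q' (i + t)) (q' (i + t + 1)) := by
            refine Finset.sum_congr rfl fun t ht => ?_
            simp only [hq'_def]
            rw [if_neg (by omega), if_neg (by omega)]
            congr 2 <;> omega
          rw [L, R, ← e1, ← e2]
          ring
        have hIH := IH (k - c) (by omega) q' hq'path
        have hdiv : (k / n : ℕ) ≤ (k - c) / n + 1 := by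
          calc k / n ≤ (k - c + n) / n := Nat.div_le_div_right (by omega)
          _ = (k - c) / n + 1 := Nat.add_div_right _ hn
        have : ((k / n : ℕ) : ℤ) ≤ ((k - c) / n : ℕ) + 1 := by exact_mod_cast hdiv
        omega
  -- the partial sums tend to -∞
  have htendsto : Filter.Tendsto (fun k => ∑ i ∈ Finset.range k, w (p i) (p (i + 1)))
      Filter.atTop Filter.atBot := by
    rw [tendsto_atBot]
    intro b
    rw [eventually_atTop]
    refine ⟨n * ((n * C - b).toNat + 1), fun k hk => ?_⟩
    have h1 := key k p hp
    have h2 : (n * C - b).toNat + 1 ≤ k / n := by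
      have := Nat.div_le_div_right (c := n) hk
      rwa [Nat.mul_div_cancel_left _ hn] at this
    have h3 : (n * C - b : ℤ) ≤ (n * C - b).toNat := Int.self_le_toNat _
    have h4 : (((n * C - b).toNat + 1 : ℕ) : ℤ) ≤ ((k / n : ℕ) : ℤ) := by exact_mod_cast h2
    push_cast at h4
    omega
  refine ⟨htendsto, ?_, ?_⟩
  · rw [iInf_eq_bot]
    intro b hb
    induction b using EReal.rec with
    | bot => exact absurd hb (lt_irrefl _)
    | top => exact ⟨0, EReal.coe_lt_top _⟩
    | coe r =>
      obtain ⟨N, hN⟩ := (tendsto_atBot.mp htendsto (⌊r⌋ - 1)).exists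
      refine ⟨N, ?_⟩
      rw [EReal.coe_lt_coe_iff]
      have h1 : ((∑ i ∈ Finset.range N, w (p i) (p (i + 1)) : ℤ) : ℝ) ≤ ((⌊r⌋ : ℤ) : ℝ) - 1 := by
        exact_mod_cast hN
      have h2 : ((⌊r⌋ : ℤ) : ℝ) ≤ r := Int.floor_le r
      linarith
  · refine lt_of_le_of_lt (iSup_le fun k => ?_) (EReal.coe_lt_top ((n * C : ℤ) : ℝ))
    rw [EReal.coe_le_coe_iff]
    have h5 : (∑ i ∈ Finset.range k, w (p i) (p (i + 1)) : ℤ) ≤ n * C :=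
      le_trans (key k p hp) (sub_le_self _ (Int.natCast_nonneg _))
    exact_mod_cast h5
end

section
/- Let φ : V → ℤ satisfy 0 ≤ φ(v) ≤ En⁺_G(v) for all v (positively safe), where En⁺_G is the energy value function of a game G. Then for every vertex v, En⁺_G(v) = φ(v) + En⁺_{G_φ}(v), where G_φ is the φ-modified game (with the convention ∞ = φ(v) + ∞). -/
/-- An infinite path `p` is consistent with Min strategy `σ`: it follows edges, and at Min
vertices it follows `σ`. -/
def ConsistentPath {V : Type*} (E : V → V → Prop) (isMin : V → Prop) (σ : V → V)
    (p : ℕ → V) : Prop :=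
  ∀ i, E (p i) (p (i + 1)) ∧ (isMin (p i) → p (i + 1) = σ (p i))

/-- The energy value `En⁺_G(v)`: the infimum over Min strategies of the supremum, over infinite
paths from `v` consistent with the strategy, of the supremum of partial weight sums. -/
noncomputable def energyVal {V : Type*} (E : V → V → Prop) (isMin : V → Prop)
    (w : V → V → ℤ) (v : V) : EReal :=
  ⨅ σ ∈ {σ : V → V | ∀ u, E u (σ u)},
    ⨆ p ∈ {p : ℕ → V | p 0 = v ∧ ConsistentPath E isMin σ p},
      ⨆ k, (((∑ i ∈ Finset.range k, w (p i) (p (i + 1)) : ℤ) : ℝ) : EReal)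

/- ### Auxiliary lemmas -/

lemma cancelL (a : ℝ) (x : EReal) : ((-a : ℝ) : EReal) + ((a : ℝ) + x) = x := by
  induction x using EReal.rec with
  | bot => simp
  | coe b => norm_cast; ring
  | top => rw [EReal.coe_add_top, EReal.coe_add_top]

lemma ereal_add_iSup {ι : Sort*} (a : ℝ) (f : ι → EReal) :
    ((a : ℝ) : EReal) + ⨆ i, f i = ⨆ i, (((a : ℝ) : EReal) + f i) := by
  apply le_antisymm
  · have h1 : ⨆ i, f i ≤ ((-a : ℝ) : EReal) + ⨆ i, (((a : ℝ) : EReal) + f i) := by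
      refine iSup_le fun i => ?_
      calc f i = ((-a : ℝ) : EReal) + ((a : ℝ) + f i) := (cancelL a (f i)).symm
        _ ≤ _ := add_le_add_right (le_iSup (fun i => ((a : ℝ) : EReal) + f i) i) _
    calc ((a : ℝ) : EReal) + ⨆ i, f i
        ≤ ((a : ℝ) : EReal) + (((-a : ℝ) : EReal) + ⨆ i, (((a : ℝ) : EReal) + f i)) :=
          add_le_add_right h1 _
      _ = ⨆ i, (((a : ℝ) : EReal) + f i) := by
          have := cancelL (-a) (⨆ i, (((a : ℝ) : EReal) + f i)); simpa using this
  · exact iSup_le fun i => add_le_add_right (le_iSup f i) _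

lemma ereal_add_iInf {ι : Sort*} (a : ℝ) (f : ι → EReal) :
    ((a : ℝ) : EReal) + ⨅ i, f i = ⨅ i, (((a : ℝ) : EReal) + f i) := by
  apply le_antisymm
  · exact le_iInf fun i => add_le_add_right (iInf_le f i) _
  · have h1 : ((-a : ℝ) : EReal) + ⨅ i, (((a : ℝ) : EReal) + f i) ≤ ⨅ i, f i := by
      refine le_iInf fun i => ?_
      calc ((-a : ℝ) : EReal) + ⨅ i, (((a : ℝ) : EReal) + f i)
          ≤ ((-a : ℝ) : EReal) + ((a : ℝ) + f i) :=
            add_le_add_right (iInf_le (fun i => ((a : ℝ) : EReal) + f i) i) _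
        _ = f i := cancelL a (f i)
    calc ⨅ i, (((a : ℝ) : EReal) + f i)
        = ((a : ℝ) : EReal) + (((-a : ℝ) : EReal) + ⨅ i, (((a : ℝ) : EReal) + f i)) := by
          have := cancelL (-a) (⨅ i, (((a : ℝ) : EReal) + f i)); simp at this
          exact this.symm
      _ ≤ _ := add_le_add_right h1 _

/-- The inner supremum (value of a fixed Min strategy). -/
noncomputable def Sval {V : Type*} (E : V → V → Prop) (isMin : V → Prop)
    (w : V → V → ℤ) (σ : V → V) (v : V) : EReal :=
  ⨆ p ∈ {p : ℕ → V | p 0 = v ∧ ConsistentPath E isMin σ p},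
    ⨆ k, (((∑ i ∈ Finset.range k, w (p i) (p (i + 1)) : ℤ) : ℝ) : EReal)

lemma energyVal_def {V : Type*} (E : V → V → Prop) (isMin : V → Prop)
    (w : V → V → ℤ) (v : V) :
    energyVal E isMin w v = ⨅ σ ∈ {σ : V → V | ∀ u, E u (σ u)}, Sval E isMin w σ v := rfl


lemma le_Sval {V : Type*} {E : V → V → Prop} {isMin : V → Prop} {w : V → V → ℤ}
    {σ : V → V} {v : V} (p : ℕ → V)
    (hp : p 0 = v ∧ ConsistentPath E isMin σ p) (k : ℕ) :
    (((∑ i ∈ Finset.range k, w (p i) (p (i + 1)) : ℤ) : ℝ) : EReal)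
      ≤ Sval E isMin w σ v := by
  unfold Sval
  exact le_trans
    (le_iSup (fun k => (((∑ i ∈ Finset.range k, w (p i) (p (i + 1)) : ℤ) : ℝ) : EReal)) k)
    (le_iSup₂ (f := fun p (_ : p ∈ {p : ℕ → V | p 0 = v ∧ ConsistentPath E isMin σ p}) =>
      ⨆ k, (((∑ i ∈ Finset.range k, w (p i) (p (i + 1)) : ℤ) : ℝ) : EReal)) p hp)

lemma tele {V : Type*} (w : V → V → ℤ) (φ : V → ℤ) (p : ℕ → V) (k : ℕ) :
    (∑ i ∈ Finset.range k, (w (p i) (p (i+1)) + φ (p (i+1)) - φ (p i)))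
      = (∑ i ∈ Finset.range k, w (p i) (p (i+1))) + φ (p k) - φ (p 0) := by
  induction k with
  | zero => simp
  | succ n ih => rw [Finset.sum_range_succ, Finset.sum_range_succ, ih]; ring

def concatP {V : Type*} (p q : ℕ → V) (k : ℕ) : ℕ → V :=
  fun i => if i < k then p i else q (i - k)

lemma concatP_of_le {V : Type*} {p q : ℕ → V} {k : ℕ} (hq0 : q 0 = p k) {i : ℕ} (h : i ≤ k) :
    concatP p q k i = p i := by
  unfold concatP
  rcases lt_or_eq_of_le h with h | h
  · simp [h]
  · subst h; simp [lt_irrefl, hq0]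

lemma concatP_of_ge {V : Type*} {p q : ℕ → V} {k i : ℕ} (h : k ≤ i) :
    concatP p q k i = q (i - k) := by
  unfold concatP; rw [if_neg (by omega)]

lemma concatP_consistent {V : Type*} {E : V → V → Prop} {isMin : V → Prop} {σ : V → V}
    {p q : ℕ → V} {k : ℕ} (hq0 : q 0 = p k)
    (hp : ConsistentPath E isMin σ p) (hq : ConsistentPath E isMin σ q) :
    ConsistentPath E isMin σ (concatP p q k) := by
  intro i
  rcases lt_or_ge i k with h | h
  · rw [concatP_of_le hq0 h.le, concatP_of_le hq0 h]
    exact hp i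
  · rw [concatP_of_ge h, concatP_of_ge (h.trans (Nat.le_succ i))]
    have h2 : i + 1 - k = (i - k) + 1 := by omega
    rw [h2]; exact hq (i - k)

lemma concatP_sum {V : Type*} (w : V → V → ℤ) {p q : ℕ → V} {k : ℕ} (hq0 : q 0 = p k) (m : ℕ) :
    ∑ i ∈ Finset.range (k + m), w (concatP p q k i) (concatP p q k (i+1))
      = (∑ i ∈ Finset.range k, w (p i) (p (i+1)))
        + ∑ i ∈ Finset.range m, w (q i) (q (i+1)) := by
  induction m with
  | zero =>
    simp only [Nat.add_zero, Finset.range_zero, Finset.sum_empty, add_zero]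
    refine Finset.sum_congr rfl fun i hi => ?_
    rw [Finset.mem_range] at hi
    rw [concatP_of_le hq0 hi.le, concatP_of_le hq0 hi]
  | succ n ih =>
    have h1 : k + (n + 1) = (k + n) + 1 := by omega
    rw [h1, Finset.sum_range_succ, ih, Finset.sum_range_succ,
      concatP_of_ge (Nat.le_add_right k n), concatP_of_ge (by omega : k ≤ k + n + 1)]
    have h2 : k + n - k = n := by omega
    have h3 : k + n + 1 - k = n + 1 := by omega
    rw [h2, h3, add_assoc]

/-- If `φ` is positively safe (`0 ≤ φ ≤ En⁺_G` pointwise), then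
`En⁺_G(v) = φ(v) + En⁺_{G_φ}(v)` for every vertex `v` (with `∞ = φ(v) + ∞`). -/
theorem energy_potential_reduction {V : Type*} [Fintype V] (E : V → V → Prop)
    (isMin : V → Prop) (w : V → V → ℤ)
    (hsinkless : ∀ v, ∃ u, E v u)
    (φ : V → ℤ)
    (hsafe : ∀ v, 0 ≤ φ v ∧ ((φ v : ℝ) : EReal) ≤ energyVal E isMin w v) :
    ∀ v, energyVal E isMin w v =
      ((φ v : ℝ) : EReal) +
        energyVal E isMin (fun u u' => w u u' + φ u' - φ u) v := by
  classical
  intro v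
  set wp : V → V → ℤ := fun u u' => w u u' + φ u' - φ u with hwp
  set s : Set (V → V) := {σ : V → V | ∀ u, E u (σ u)} with hs
  -- telescoping, path starting at v
  have htele : ∀ (p : ℕ → V), p 0 = v → ∀ k,
      (∑ i ∈ Finset.range k, wp (p i) (p (i+1)))
        = (∑ i ∈ Finset.range k, w (p i) (p (i+1))) + φ (p k) - φ v := by
    intro p hp0 k
    have := tele w φ p k
    rw [hp0] at this
    exact this
  -- Lemma A: for every strategy, S_w σ v ≤ φ v + S_{wp} σ v
  have hA : ∀ σ : V → V,
      Sval E isMin w σ v ≤ ((φ v : ℝ) : EReal) + Sval E isMin wp σ v := by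
    intro σ
    refine iSup₂_le fun p hp => iSup_le fun k => ?_
    have h1 : (((∑ i ∈ Finset.range k, wp (p i) (p (i + 1)) : ℤ) : ℝ) : EReal)
        ≤ Sval E isMin wp σ v :=
      le_Sval p hp k
    have hk := htele p hp.1 k
    calc (((∑ i ∈ Finset.range k, w (p i) (p (i + 1)) : ℤ) : ℝ) : EReal)
        ≤ (((φ v + ∑ i ∈ Finset.range k, wp (p i) (p (i + 1)) : ℤ) : ℝ) : EReal) := by
          apply EReal.coe_le_coe_iff.2
          exact_mod_cast (by have := (hsafe (p k)).1; omega :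
            (∑ i ∈ Finset.range k, w (p i) (p (i + 1)))
              ≤ φ v + ∑ i ∈ Finset.range k, wp (p i) (p (i + 1)))
      _ = ((φ v : ℝ) : EReal)
            + (((∑ i ∈ Finset.range k, wp (p i) (p (i + 1)) : ℤ) : ℝ) : EReal) := by
          rw [Int.cast_add, EReal.coe_add]
      _ ≤ ((φ v : ℝ) : EReal) + Sval E isMin wp σ v := add_le_add_right h1 _
  -- Direction 1
  have hD1 : energyVal E isMin w v
      ≤ ((φ v : ℝ) : EReal) + energyVal E isMin wp v := by
    rw [energyVal_def E isMin w v, energyVal_def E isMin wp v]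
    have hrw : ((φ v : ℝ) : EReal) + ⨅ σ ∈ s, Sval E isMin wp σ v
        = ⨅ σ ∈ s, (((φ v : ℝ) : EReal) + Sval E isMin wp σ v) := by
      rw [ereal_add_iInf]
      exact iInf_congr fun σ => ereal_add_iInf _ _
    rw [hrw]
    exact iInf₂_mono fun σ _ => hA σ
  -- Direction 2
  have hne : s.Nonempty :=
    ⟨fun u => (hsinkless u).choose, fun u => (hsinkless u).choose_spec⟩
  obtain ⟨σ, hσ, hmin⟩ :=
    Set.exists_min_image s (fun σ => Sval E isMin w σ v) (Set.toFinite s) hne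
  have hEn : energyVal E isMin w v = Sval E isMin w σ v := by
    rw [energyVal_def E isMin w v]
    exact le_antisymm (iInf₂_le σ hσ) (le_iInf₂ hmin)
  have hB : ((φ v : ℝ) : EReal) + Sval E isMin wp σ v ≤ Sval E isMin w σ v := by
    have hrw : ((φ v : ℝ) : EReal) + Sval E isMin wp σ v
        = ⨆ p, ⨆ (_ : p ∈ {p : ℕ → V | p 0 = v ∧ ConsistentPath E isMin σ p}),
            ⨆ k, (((φ v : ℝ) : EReal)
              + (((∑ i ∈ Finset.range k, wp (p i) (p (i + 1)) : ℤ) : ℝ) : EReal)) := by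
      unfold Sval
      rw [ereal_add_iSup]
      refine iSup_congr fun p => ?_
      rw [ereal_add_iSup]
      exact iSup_congr fun hp => ereal_add_iSup _ _
    rw [hrw]
    refine iSup_le fun p => iSup_le fun hp => iSup_le fun k => ?_
    obtain ⟨hp0, hpc⟩ := hp
    have hk := htele p hp0 k
    have step1 : ((φ v : ℝ) : EReal)
          + (((∑ i ∈ Finset.range k, wp (p i) (p (i + 1)) : ℤ) : ℝ) : EReal)
        = (((∑ i ∈ Finset.range k, w (p i) (p (i + 1)) : ℤ) : ℝ) : EReal)
          + ((φ (p k) : ℝ) : EReal) := by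
      rw [← EReal.coe_add, ← EReal.coe_add]
      congr 1
      push_cast
      have : (φ v : ℝ) + ((∑ i ∈ Finset.range k, wp (p i) (p (i + 1)) : ℤ) : ℝ)
          = ((φ v + ∑ i ∈ Finset.range k, wp (p i) (p (i + 1)) : ℤ) : ℝ) := by push_cast; ring
      exact_mod_cast congrArg (fun z : ℤ => (z : ℝ)) (by omega :
        φ v + (∑ i ∈ Finset.range k, wp (p i) (p (i + 1)))
          = (∑ i ∈ Finset.range k, w (p i) (p (i + 1))) + φ (p k))
    rw [step1]
    have hφk : ((φ (p k) : ℝ) : EReal) ≤ Sval E isMin w σ (p k) := by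
      refine le_trans (hsafe (p k)).2 ?_
      rw [energyVal_def E isMin w (p k)]
      exact iInf₂_le σ hσ
    refine le_trans (add_le_add_right hφk _) ?_
    have hrw2 : (((∑ i ∈ Finset.range k, w (p i) (p (i + 1)) : ℤ) : ℝ) : EReal)
          + Sval E isMin w σ (p k)
        = ⨆ q, ⨆ (_ : q ∈ {q : ℕ → V | q 0 = p k ∧ ConsistentPath E isMin σ q}),
            ⨆ m, ((((∑ i ∈ Finset.range k, w (p i) (p (i + 1)))
              + ∑ i ∈ Finset.range m, w (q i) (q (i + 1)) : ℤ) : ℝ) : EReal) := by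
      unfold Sval
      rw [ereal_add_iSup]
      refine iSup_congr fun q => ?_
      rw [ereal_add_iSup]
      refine iSup_congr fun hq => ?_
      rw [ereal_add_iSup]
      refine iSup_congr fun m => ?_
      rw [← EReal.coe_add]
      norm_cast
    rw [hrw2]
    refine iSup_le fun q => iSup_le fun hq => iSup_le fun m => ?_
    obtain ⟨hq0, hqc⟩ := hq
    have hr0 : concatP p q k 0 = v := by
      rw [concatP_of_le hq0 (Nat.zero_le k), hp0]
    have hr : (((∑ i ∈ Finset.range (k + m),
          w (concatP p q k i) (concatP p q k (i + 1)) : ℤ) : ℝ) : EReal)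
        ≤ Sval E isMin w σ v :=
      le_Sval (concatP p q k) ⟨hr0, concatP_consistent hq0 hpc hqc⟩ (k + m)
    rw [concatP_sum w hq0 m] at hr
    exact hr
  refine le_antisymm hD1 ?_
  rw [hEn]
  have h2 : energyVal E isMin wp v ≤ Sval E isMin wp σ v := by
    rw [energyVal_def E isMin wp v]
    exact iInf₂_le σ hσ
  exact le_trans (add_le_add_right h2 _) hB
end

section
/- If φ is positively safe for game G (i.e., 0 ≤ φ ≤ En⁺_G pointwise) and φ' is positively safe for the modified game G_φ, then φ + φ' is positively safe for G. -/
/-- A potential is positively safe for a game if `0 ≤ φ ≤ En⁺` pointwise. -/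
def PositivelySafe {V : Type*} (E : V → V → Prop) (isMin : V → Prop) (w : V → V → ℤ)
    (φ : V → ℤ) : Prop :=
  ∀ v, 0 ≤ φ v ∧ ((φ v : ℝ) : EReal) ≤ energyVal E isMin w v

/-- From an integer lower bound on a sup of integer-valued quantities, extract a witness
attaining the bound. -/
lemma exists_ge_of_int_le_iSup {α : Type*} (P : α → Prop) (g : α → ℕ → ℤ) (n : ℤ)
    (h : ((n : ℝ) : EReal) ≤ ⨆ a ∈ {a | P a}, ⨆ k, (((g a k : ℤ) : ℝ) : EReal)) :
    ∃ a, P a ∧ ∃ k, n ≤ g a k := by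
  have h2 : (((n - 1 : ℤ) : ℝ) : EReal) < ⨆ a ∈ {a | P a}, ⨆ k, (((g a k : ℤ) : ℝ) : EReal) := by
    refine lt_of_lt_of_le ?_ h
    rw [EReal.coe_lt_coe_iff]
    exact_mod_cast sub_one_lt n
  rw [lt_iSup_iff] at h2
  obtain ⟨a, ha⟩ := h2
  rw [lt_iSup_iff] at ha
  obtain ⟨hPa, ha⟩ := ha
  rw [lt_iSup_iff] at ha
  obtain ⟨k, hk⟩ := ha
  rw [EReal.coe_lt_coe_iff] at hk
  have : n - 1 < g a k := by exact_mod_cast hk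
  exact ⟨a, hPa, k, by omega⟩

lemma telescope_sum {V : Type*} (w : V → V → ℤ) (φ : V → ℤ) (p : ℕ → V) (k : ℕ) :
    ∑ i ∈ Finset.range k, (w (p i) (p (i + 1)) + φ (p (i + 1)) - φ (p i)) =
      ∑ i ∈ Finset.range k, w (p i) (p (i + 1)) + φ (p k) - φ (p 0) := by
  induction k with
  | zero => simp
  | succ k ih => rw [Finset.sum_range_succ, ih, Finset.sum_range_succ]; ring

/-- If `φ` is positively safe for `G` and `φ'` is positively safe for the
modified game `G_φ`, then `φ + φ'` is positively safe for `G`. -/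
theorem positively_safe_composition {V : Type*} [Fintype V] (E : V → V → Prop)
    (isMin : V → Prop) (w : V → V → ℤ)
    (hsinkless : ∀ v, ∃ u, E v u)
    (φ φ' : V → ℤ)
    (hφ : PositivelySafe E isMin w φ)
    (hφ' : PositivelySafe E isMin (fun u u' => w u u' + φ u' - φ u) φ') :
    PositivelySafe E isMin w (fun v => φ v + φ' v) := by
  intro v
  refine ⟨add_nonneg (hφ v).1 (hφ' v).1, ?_⟩
  rw [energyVal]
  refine le_iInf₂ fun σ hσ => ?_
  -- extract a path witnessing `φ' v ≤` sup of modified sums, for this σ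
  have h1 : ((φ' v : ℝ) : EReal) ≤
      ⨆ p ∈ {p : ℕ → V | p 0 = v ∧ ConsistentPath E isMin σ p},
        ⨆ k, (((∑ i ∈ Finset.range k,
          (w (p i) (p (i + 1)) + φ (p (i + 1)) - φ (p i)) : ℤ) : ℝ) : EReal) :=
    le_trans (hφ' v).2 (iInf₂_le σ hσ)
  obtain ⟨p, ⟨hp0, hpc⟩, k, hk⟩ := exists_ge_of_int_le_iSup _ _ _ h1
  -- telescoping
  rw [telescope_sum, hp0] at hk
  have hkey : φ v + φ' v ≤ ∑ i ∈ Finset.range k, w (p i) (p (i + 1)) + φ (p k) := by omega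
  -- extract a continuation path from `p k` witnessing `φ (p k)`
  have h2 : ((φ (p k) : ℝ) : EReal) ≤
      ⨆ q ∈ {q : ℕ → V | q 0 = p k ∧ ConsistentPath E isMin σ q},
        ⨆ m, (((∑ j ∈ Finset.range m, w (q j) (q (j + 1)) : ℤ) : ℝ) : EReal) :=
    le_trans (hφ (p k)).2 (iInf₂_le σ hσ)
  obtain ⟨q, ⟨hq0, hqc⟩, m, hm⟩ := exists_ge_of_int_le_iSup _ _ _ h2
  -- concatenate p (up to k) with q
  set r : ℕ → V := fun i => if i ≤ k then p i else q (i - k) with hr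
  have hrp : ∀ i, i ≤ k → r i = p i := fun i hi => by simp [hr, hi]
  have hrq : ∀ j, r (k + j) = q j := by
    intro j
    rcases Nat.eq_zero_or_pos j with hj | hj
    · simp [hr, hj, hq0]
    · have : ¬ (k + j ≤ k) := by omega
      simp [hr, this]
  have hrc : ConsistentPath E isMin σ r := by
    intro i
    rcases lt_trichotomy i k with hi | hi | hi
    · rw [hrp i (le_of_lt hi), hrp (i + 1) (by omega)]
      exact hpc i
    · subst hi
      have e1 : r i = q 0 := by simpa using hrq 0
      have e2 : r (i + 1) = q 1 := by simpa using hrq 1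
      rw [e1, e2]
      exact hqc 0
    · have e1 : r i = q (i - k) := by
        have := hrq (i - k); rwa [Nat.add_sub_cancel' (le_of_lt hi)] at this
      have e2 : r (i + 1) = q (i - k + 1) := by
        have := hrq (i - k + 1); rwa [show k + (i - k + 1) = i + 1 by omega] at this
      rw [e1, e2]
      exact hqc (i - k)
  have hr0 : r 0 = v := by rw [hrp 0 (Nat.zero_le k), hp0]
  -- the sum along r splits
  have hsum : ∑ i ∈ Finset.range (k + m), w (r i) (r (i + 1)) =
      ∑ i ∈ Finset.range k, w (p i) (p (i + 1)) + ∑ j ∈ Finset.range m, w (q j) (q (j + 1)) := by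
    rw [Finset.sum_range_add]
    congr 1
    · refine Finset.sum_congr rfl fun i hi => ?_
      rw [Finset.mem_range] at hi
      rw [hrp i (le_of_lt hi), hrp (i + 1) hi]
    · refine Finset.sum_congr rfl fun j _ => ?_
      rw [hrq j, show k + j + 1 = k + (j + 1) from rfl, hrq (j + 1)]
  -- conclude
  have hfin : φ v + φ' v ≤ ∑ i ∈ Finset.range (k + m), w (r i) (r (i + 1)) := by
    rw [hsum]; omega
  calc ((((fun v => φ v + φ' v) v : ℤ) : ℝ) : EReal)
      ≤ (((∑ i ∈ Finset.range (k + m), w (r i) (r (i + 1)) : ℤ) : ℝ) : EReal) := by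
        rw [EReal.coe_le_coe_iff]; exact_mod_cast hfin
    _ ≤ ⨆ p ∈ {p : ℕ → V | p 0 = v ∧ ConsistentPath E isMin σ p},
          ⨆ k, (((∑ i ∈ Finset.range k, w (p i) (p (i + 1)) : ℤ) : ℝ) : EReal) :=
        le_iSup₂_of_le r ⟨hr0, hrc⟩ (le_iSup_of_le (k + m) le_rfl)
end
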